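/- arXiv:2412.06310 — 7 statements merged into one kernel-verified Lean document; each statement's English description precedes it below -/
import Mathlib

section
/- Let V be a real Hilbert space, N a positive natural number, and v₁, …, v_N ∈ V with Gram matrix M ∈ ℝᴺˣᴺ, Mᵢⱼ := ⟨vⱼ, vᵢ⟩, assumed invertible. Let A : V → V be any map and define the matrix J ∈ ℝᴺˣᴺ by Jᵢⱼ := ⟨A vⱼ, vᵢ⟩. Given f, l ∈ ℝᴺ, set δF := Σⱼ (M⁻¹ f)ⱼ vⱼ ∈ V and δL := Σⱼ (M⁻¹ l)ⱼ vⱼ ∈ V. Then ⟨A δF, δL⟩ = l · (M⁻¹ J M⁻¹ f), where · denotes the Euclidean inner product on ℝᴺ. (Thus the continuous Poisson bracket {F, L}(u_N) = ⟨𝒥(u_N) δF(u_N), δL(u_N)⟩, restricted to the finite-dimensional subspace spanned by v₁, …, v_N, equals the discrete bracket Ĵ(a)∇F(a)·∇L(a) with Ĵ(a) = M⁻¹ J(a) M⁻¹.) -/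
open RealInnerProductSpace Matrix

/-- Let `v₁, …, v_N ∈ V` have invertible Gram matrix `M` (`Mᵢⱼ = ⟪vⱼ, vᵢ⟫`),
let `A` be a linear operator on `V` representing the Poisson operator, and `Jᵢⱼ := ⟪A vⱼ, vᵢ⟫`.
Given `f, l ∈ ℝᴺ`, set `δF := ∑ⱼ (M⁻¹ f)ⱼ vⱼ` and `δL := ∑ⱼ (M⁻¹ l)ⱼ vⱼ`. Then
`⟪A δF, δL⟫ = l · (M⁻¹ J M⁻¹ f)`: the continuous Poisson bracket restricted to the span of the
`vⱼ` equals the discrete bracket with `Ĵ = M⁻¹ J M⁻¹`. -/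
theorem stmt_5 {V : Type*} [NormedAddCommGroup V] [InnerProductSpace ℝ V]
    (N : ℕ) (hN : 0 < N) (v : Fin N → V)
    (M : Matrix (Fin N) (Fin N) ℝ) (hM : ∀ i j, M i j = ⟪v j, v i⟫) (hMu : IsUnit M)
    (A : V →ₗ[ℝ] V)
    (J : Matrix (Fin N) (Fin N) ℝ) (hJ : ∀ i j, J i j = ⟪A (v j), v i⟫)
    (f l : Fin N → ℝ)
    (δF δL : V)
    (hδF : δF = ∑ j, M⁻¹.mulVec f j • v j)
    (hδL : δL = ∑ j, M⁻¹.mulVec l j • v j) :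
    ⟪A δF, δL⟫ = l ⬝ᵥ (M⁻¹ * J * M⁻¹).mulVec f := by
  have hMsymm : Mᵀ = M := by ext i j; simp [hM, real_inner_comm]
  have hinv : (M⁻¹)ᵀ = M⁻¹ := by rw [Matrix.transpose_nonsing_inv, hMsymm]
  have key : l ⬝ᵥ (M⁻¹ * J * M⁻¹).mulVec f
      = M⁻¹.mulVec l ⬝ᵥ (J.mulVec (M⁻¹.mulVec f)) := by
    rw [← Matrix.mulVec_mulVec, ← Matrix.mulVec_mulVec, Matrix.dotProduct_mulVec,
      ← Matrix.mulVec_transpose, hinv]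
  rw [key, hδF, hδL, map_sum, sum_inner]
  simp only [inner_sum]
  simp only [inner_smul_left, inner_smul_right, map_sum, LinearMap.map_smul,
    inner_smul_left, conj_trivial]
  rw [Finset.sum_comm]
  simp only [dotProduct, Matrix.mulVec, dotProduct, hJ]
  ring_nf
  congr 1
  ext i
  rw [Finset.mul_sum]
  congr 1
  ext j
  ring
end

section
/- Let N be a positive natural number, M ∈ ℝᴺˣᴺ a symmetric invertible matrix, J : ℝᴺ → ℝᴺˣᴺ a matrix-valued map with J(a)ᵀ = −J(a) for all a, and H : ℝᴺ → ℝ differentiable. Suppose a : ℝ → ℝᴺ is differentiable and b : ℝ → ℝᴺ satisfies, for all t, the semi-discrete mixed system M a'(t) = J(a(t)) b(t) and M b(t) = ∇H(a(t)). Then a'(t) = Ĵ(a(t)) ∇H(a(t)) with Ĵ(a) := M⁻¹ J(a) M⁻¹, and the discrete Hamiltonian is exactly conserved: t ↦ H(a(t)) is constant. -/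
open Matrix

/-! Eliminating `b = M⁻¹ ∇H(a)` turns the mixed system into `a' = M⁻¹ J(a) M⁻¹ ∇H(a)`. For energy
conservation, the symmetry of `M` moves it across the dot product:
`⟪∇H(a), a'⟫ = (M b) ⬝ a' = b ⬝ (M a') = b ⬝ (J(a) b)`, which vanishes because `J(a)` is skew. -/

namespace Matrix

variable {n R : Type*} [Fintype n]

theorem dotProduct_mulVec_self_eq_zero_of_transpose_eq_neg [CommRing R] [IsAddTorsionFree R]
    {J : Matrix n n R} (hJ : Jᵀ = -J) (v : n → R) : v ⬝ᵥ (J *ᵥ v) = 0 := by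
  refine self_eq_neg.mp ?_
  calc v ⬝ᵥ (J *ᵥ v) = v ᵥ* J ⬝ᵥ v := dotProduct_mulVec v J v
    _ = Jᵀ *ᵥ v ⬝ᵥ v := by rw [mulVec_transpose]
    _ = -(v ⬝ᵥ (J *ᵥ v)) := by rw [hJ, neg_mulVec, neg_dotProduct, dotProduct_comm]

variable [CommRing R] {M J : Matrix n n R} {x' y g : n → R}

theorem eq_inv_mul_mul_inv_mulVec [DecidableEq n] (hM : IsUnit M) (h₁ : M *ᵥ x' = J *ᵥ y)
    (h₂ : M *ᵥ y = g) : x' = (M⁻¹ * J * M⁻¹) *ᵥ g := by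
  have hMinv : M⁻¹ * M = 1 := nonsing_inv_mul M ((isUnit_iff_isUnit_det M).mp hM)
  rw [← h₂, ← mulVec_mulVec, mulVec_mulVec y M⁻¹ M, hMinv, one_mulVec, ← mulVec_mulVec, ← h₁,
    mulVec_mulVec, hMinv, one_mulVec]

theorem dotProduct_eq_zero_of_mulVec_eq_skew_mulVec [IsAddTorsionFree R] (hM : M.IsSymm)
    (hJ : Jᵀ = -J) (h₁ : M *ᵥ x' = J *ᵥ y) (h₂ : M *ᵥ y = g) : g ⬝ᵥ x' = 0 := by
  calc g ⬝ᵥ x' = y ⬝ᵥ (Mᵀ *ᵥ x') := by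
        rw [← h₂, dotProduct_comm, dotProduct_mulVec, mulVec_transpose, dotProduct_comm]
    _ = y ⬝ᵥ (J *ᵥ y) := by rw [hM.eq, h₁]
    _ = 0 := dotProduct_mulVec_self_eq_zero_of_transpose_eq_neg hJ y

end Matrix

theorem apply_eq_of_inner_gradient_eq_zero {E : Type*} [NormedAddCommGroup E]
    [InnerProductSpace ℝ E] [CompleteSpace E] {H : E → ℝ} (hH : Differentiable ℝ H)
    {a a' : ℝ → E} (ha : ∀ t, HasDerivAt a (a' t) t)
    (horth : ∀ t, inner ℝ (gradient H (a t)) (a' t) = 0) (t s : ℝ) : H (a t) = H (a s) := by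
  have hderiv (t : ℝ) : HasDerivAt (fun t => H (a t)) 0 t := by
    have := (hH (a t)).hasGradientAt.hasFDerivAt.comp_hasDerivAt t (ha t)
    rwa [InnerProductSpace.toDual_apply_apply, horth] at this
  exact is_const_of_deriv_eq_zero (fun t => (hderiv t).differentiableAt)
    (fun t => (hderiv t).deriv) t s

theorem stmt_7_general (N : ℕ)
    (M : Matrix (Fin N) (Fin N) ℝ) (hMsymm : M.IsSymm) (hMu : IsUnit M)
    (J : EuclideanSpace ℝ (Fin N) → Matrix (Fin N) (Fin N) ℝ)
    (hJ : ∀ x, (J x)ᵀ = -(J x))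
    (H : EuclideanSpace ℝ (Fin N) → ℝ) (hH : Differentiable ℝ H)
    (a a' b : ℝ → EuclideanSpace ℝ (Fin N))
    (ha : ∀ t : ℝ, HasDerivAt a (a' t) t)
    (h1 : ∀ t : ℝ, M.mulVec (a' t) = (J (a t)).mulVec (b t))
    (h2 : ∀ t : ℝ, M.mulVec (b t) = (gradient H (a t) : EuclideanSpace ℝ (Fin N))) :
    (∀ t : ℝ, a' t = (M⁻¹ * J (a t) * M⁻¹).mulVec (gradient H (a t) : EuclideanSpace ℝ (Fin N))) ∧
      ∀ t s : ℝ, H (a t) = H (a s) := by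
  refine ⟨fun t => eq_inv_mul_mul_inv_mulVec hMu (h1 t) (h2 t), ?_⟩
  refine apply_eq_of_inner_gradient_eq_zero hH ha fun t => ?_
  rw [EuclideanSpace.inner_eq_star_dotProduct, star_trivial, dotProduct_comm]
  exact dotProduct_eq_zero_of_mulVec_eq_skew_mulVec hMsymm (hJ _) (h1 t) (h2 t)

/-- Let `M` be symmetric invertible, `J(a)` skew-symmetric for all `a`, and `H`
differentiable. If `a, b : ℝ → ℝᴺ` satisfy the semi-discrete mixed system
`M a'(t) = J(a(t)) b(t)`, `M b(t) = ∇H(a(t))`, then `a'(t) = Ĵ(a(t)) ∇H(a(t))` with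
`Ĵ(a) = M⁻¹ J(a) M⁻¹`, and the discrete Hamiltonian `t ↦ H(a(t))` is exactly conserved. -/
theorem stmt_7 (N : ℕ) (hN : 0 < N)
    (M : Matrix (Fin N) (Fin N) ℝ) (hMsymm : M.IsSymm) (hMu : IsUnit M)
    (J : EuclideanSpace ℝ (Fin N) → Matrix (Fin N) (Fin N) ℝ)
    (hJ : ∀ x, (J x)ᵀ = -(J x))
    (H : EuclideanSpace ℝ (Fin N) → ℝ) (hH : Differentiable ℝ H)
    (a a' b : ℝ → EuclideanSpace ℝ (Fin N))
    (ha : ∀ t : ℝ, HasDerivAt a (a' t) t)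
    (h1 : ∀ t : ℝ, M.mulVec (a' t) = (J (a t)).mulVec (b t))
    (h2 : ∀ t : ℝ, M.mulVec (b t) = (gradient H (a t) : EuclideanSpace ℝ (Fin N))) :
    (∀ t : ℝ, a' t = (M⁻¹ * J (a t) * M⁻¹).mulVec (gradient H (a t) : EuclideanSpace ℝ (Fin N))) ∧
      ∀ t s : ℝ, H (a t) = H (a s) :=
  stmt_7_general N M hMsymm hMu J hJ H hH a a' b ha h1 h2
end

section
/- Let N be a positive natural number, M ∈ ℝᴺˣᴺ a symmetric positive definite matrix, G : ℝᴺ → ℝᴺˣᴺ a matrix-valued map such that G(a) is symmetric positive semi-definite for every a ∈ ℝᴺ, and S : ℝᴺ → ℝ differentiable. Suppose a : ℝ → ℝᴺ is differentiable and c : ℝ → ℝᴺ satisfies, for all t, M a'(t) = G(a(t)) c(t) and M c(t) = ∇S(a(t)). Then a'(t) = Ĝ(a(t)) ∇S(a(t)) with Ĝ(a) := M⁻¹ G(a) M⁻¹, the derivative of the discrete entropy satisfies d/dt S(a(t)) = ∇S(a(t)) · (Ĝ(a(t)) ∇S(a(t))) ≥ 0, and hence t ↦ S(a(t)) is monotone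 nondecreasing. -/
open Matrix

/-! Eliminating `c = M⁻¹ ∇S(a)` turns the mixed system into
`a' = Ĝ(a) ∇S(a)`, and `Ĝ(a) = M⁻¹ G(a) M⁻¹` is a congruence of `G(a)` by the symmetric
matrix `M⁻¹`, hence positive semi-definite. By the chain rule the entropy therefore grows at the
rate `∇S · Ĝ ∇S ≥ 0`. -/

namespace Matrix

variable {n R : Type*} [Fintype n] [DecidableEq n]

theorem eq_inv_mul_mul_inv_mulVec_of_mulVec_eq [CommRing R] {M G : Matrix n n R}
    (hM : IsUnit M) {v c g : n → R} (hv : M *ᵥ v = G *ᵥ c) (hc : M *ᵥ c = g) :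
    v = (M⁻¹ * G * M⁻¹) *ᵥ g := by
  have cancel : ∀ w : n → R, M⁻¹ *ᵥ (M *ᵥ w) = w := fun w => by
    rw [mulVec_mulVec, nonsing_inv_mul M (M.isUnit_iff_isUnit_det.mp hM), one_mulVec]
  calc v = M⁻¹ *ᵥ (G *ᵥ (M⁻¹ *ᵥ (M *ᵥ c))) := by rw [cancel, ← hv, cancel]
    _ = (M⁻¹ * G * M⁻¹) *ᵥ g := by rw [hc, mulVec_mulVec, mulVec_mulVec]

theorem PosSemidef.inv_mul_mul_inv [CommRing R] [PartialOrder R] [StarRing R]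
    {M G : Matrix n n R} (hM : M.IsHermitian) (hG : G.PosSemidef) :
    (M⁻¹ * G * M⁻¹).PosSemidef := by
  simpa only [hM.inv.eq] using hG.mul_mul_conjTranspose_same M⁻¹

end Matrix

theorem HasGradientAt.comp_hasDerivAt {F : Type*} [NormedAddCommGroup F]
    [InnerProductSpace ℝ F] [CompleteSpace F] {f : F → ℝ} {f' γ' : F} {γ : ℝ → F} {t : ℝ}
    (hf : HasGradientAt f f' (γ t)) (hγ : HasDerivAt γ γ' t) :
    HasDerivAt (fun τ => f (γ τ)) (inner ℝ f' γ') t :=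
  hf.hasFDerivAt.comp_hasDerivAt t hγ

theorem stmt_8_general (N : ℕ)
    (M : Matrix (Fin N) (Fin N) ℝ) (hM : M.PosDef)
    (G : EuclideanSpace ℝ (Fin N) → Matrix (Fin N) (Fin N) ℝ)
    (hG : ∀ x, (G x).PosSemidef)
    (S : EuclideanSpace ℝ (Fin N) → ℝ) (hS : Differentiable ℝ S)
    (a a' c : ℝ → EuclideanSpace ℝ (Fin N))
    (ha : ∀ t : ℝ, HasDerivAt a (a' t) t)
    (h1 : ∀ t : ℝ, M.mulVec (a' t) = (G (a t)).mulVec (c t))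
    (h2 : ∀ t : ℝ, M.mulVec (c t) = (gradient S (a t) : EuclideanSpace ℝ (Fin N))) :
    (∀ t : ℝ, a' t =
        (M⁻¹ * G (a t) * M⁻¹).mulVec (gradient S (a t) : EuclideanSpace ℝ (Fin N))) ∧
    (∀ t : ℝ, HasDerivAt (fun τ => S (a τ))
        ((gradient S (a t) : EuclideanSpace ℝ (Fin N)) ⬝ᵥ
          (M⁻¹ * G (a t) * M⁻¹).mulVec (gradient S (a t) : EuclideanSpace ℝ (Fin N))) t ∧
      0 ≤ (gradient S (a t) : EuclideanSpace ℝ (Fin N)) ⬝ᵥ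
          (M⁻¹ * G (a t) * M⁻¹).mulVec (gradient S (a t) : EuclideanSpace ℝ (Fin N))) ∧
    Monotone fun t => S (a t) := by
  have velocity : ∀ t, a' t =
      (M⁻¹ * G (a t) * M⁻¹) *ᵥ (gradient S (a t) : EuclideanSpace ℝ (Fin N)) := fun t =>
    eq_inv_mul_mul_inv_mulVec_of_mulVec_eq hM.isUnit (h1 t) (h2 t)
  have entropy_rate : ∀ t, HasDerivAt (fun τ => S (a τ))
      ((gradient S (a t) : EuclideanSpace ℝ (Fin N)) ⬝ᵥ
        (M⁻¹ * G (a t) * M⁻¹) *ᵥ (gradient S (a t) : EuclideanSpace ℝ (Fin N))) t := fun t => by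
    have := (hS (a t)).hasGradientAt.comp_hasDerivAt (ha t)
    rwa [EuclideanSpace.inner_eq_star_dotProduct, velocity t, star_trivial, dotProduct_comm]
      at this
  have rate_nonneg : ∀ t, 0 ≤ (gradient S (a t) : EuclideanSpace ℝ (Fin N)) ⬝ᵥ
      (M⁻¹ * G (a t) * M⁻¹) *ᵥ (gradient S (a t) : EuclideanSpace ℝ (Fin N)) := fun t =>
    ((hG (a t)).inv_mul_mul_inv hM.isHermitian).dotProduct_mulVec_nonneg _
  exact ⟨velocity, fun t => ⟨entropy_rate t, rate_nonneg t⟩,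
    monotone_of_hasDerivAt_nonneg entropy_rate rate_nonneg⟩

/-- Let `M` be symmetric positive definite, `G(a)` symmetric positive
semi-definite for all `a`, and `S` differentiable. If `a, c : ℝ → ℝᴺ` satisfy
`M a'(t) = G(a(t)) c(t)`, `M c(t) = ∇S(a(t))`, then `a'(t) = Ĝ(a(t)) ∇S(a(t))` with
`Ĝ(a) = M⁻¹ G(a) M⁻¹`, the derivative of the discrete entropy is
`d/dt S(a(t)) = ∇S(a(t)) · (Ĝ(a(t)) ∇S(a(t))) ≥ 0`, and `t ↦ S(a(t))` is monotone
nondecreasing. -/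
theorem stmt_8 (N : ℕ) (hN : 0 < N)
    (M : Matrix (Fin N) (Fin N) ℝ) (hM : M.PosDef)
    (G : EuclideanSpace ℝ (Fin N) → Matrix (Fin N) (Fin N) ℝ)
    (hG : ∀ x, (G x).PosSemidef)
    (S : EuclideanSpace ℝ (Fin N) → ℝ) (hS : Differentiable ℝ S)
    (a a' c : ℝ → EuclideanSpace ℝ (Fin N))
    (ha : ∀ t : ℝ, HasDerivAt a (a' t) t)
    (h1 : ∀ t : ℝ, M.mulVec (a' t) = (G (a t)).mulVec (c t))
    (h2 : ∀ t : ℝ, M.mulVec (c t) = (gradient S (a t) : EuclideanSpace ℝ (Fin N))) :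
    (∀ t : ℝ, a' t =
        (M⁻¹ * G (a t) * M⁻¹).mulVec (gradient S (a t) : EuclideanSpace ℝ (Fin N))) ∧
    (∀ t : ℝ, HasDerivAt (fun τ => S (a τ))
        ((gradient S (a t) : EuclideanSpace ℝ (Fin N)) ⬝ᵥ
          (M⁻¹ * G (a t) * M⁻¹).mulVec (gradient S (a t) : EuclideanSpace ℝ (Fin N))) t ∧
      0 ≤ (gradient S (a t) : EuclideanSpace ℝ (Fin N)) ⬝ᵥ
          (M⁻¹ * G (a t) * M⁻¹).mulVec (gradient S (a t) : EuclideanSpace ℝ (Fin N))) ∧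
    Monotone fun t => S (a t) :=
  stmt_8_general N M hM G hG S hS a a' c ha h1 h2
end

section
/- Let V be a real Hilbert space, N a positive natural number, v₁, …, v_N ∈ V with invertible Gram matrix M (Mᵢⱼ = ⟨vⱼ, vᵢ⟩), and A : V → V a map. Define J ∈ ℝᴺˣᴺ by Jᵢⱼ := ⟨A vⱼ, vᵢ⟩ and Ĵ := M⁻¹ J M⁻¹. Let F : ℝᴺ → ℝ be differentiable at a ∈ ℝᴺ and set δF := Σⱼ (M⁻¹ ∇F(a))ⱼ vⱼ ∈ V. If ⟨A δF, vᵢ⟩ = 0 for every 1 ≤ i ≤ N (in particular, if A δF = 0, i.e. δF lies in the kernel of A), then Ĵ ∇F(a) = 0, so ∇F(a) lies in the kernel of the discrete Poisson matrix Ĵ. (Thus discretisations of continuous Casimirs whose gradients lie in the approximation space are discrete Casimirs.) -/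
open RealInnerProductSpace Matrix

theorem mulVec_eq_inner_map_sum {V : Type*} [NormedAddCommGroup V] [InnerProductSpace ℝ V]
    {ι : Type*} [Fintype ι] (v : ι → V) (A : V →ₗ[ℝ] V) (J : Matrix ι ι ℝ)
    (hJ : ∀ i j, J i j = ⟪A (v j), v i⟫) (c : ι → ℝ) (i : ι) :
    J.mulVec c i = ⟪A (∑ j, c j • v j), v i⟫ := by
  simp only [mulVec, dotProduct, hJ, map_sum, map_smul, sum_inner, real_inner_smul_left]
  exact Finset.sum_congr rfl fun j _ => mul_comm _ _

theorem stmt_9_general {V : Type*} [NormedAddCommGroup V] [InnerProductSpace ℝ V]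
    (N : ℕ) (v : Fin N → V)
    (M : Matrix (Fin N) (Fin N) ℝ)
    (A : V →ₗ[ℝ] V)
    (J : Matrix (Fin N) (Fin N) ℝ) (hJ : ∀ i j, J i j = ⟪A (v j), v i⟫)
    (F : EuclideanSpace ℝ (Fin N) → ℝ) (a : EuclideanSpace ℝ (Fin N))
    (δF : V)
    (hδF : δF = ∑ j, M⁻¹.mulVec (gradient F a : EuclideanSpace ℝ (Fin N)) j • v j)
    (hker : ∀ i, ⟪A δF, v i⟫ = 0) :
    (M⁻¹ * J * M⁻¹).mulVec (gradient F a : EuclideanSpace ℝ (Fin N)) = 0 := by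
  set g : Fin N → ℝ := ⇑(gradient F a : EuclideanSpace ℝ (Fin N))
  have hJδF : J.mulVec (M⁻¹.mulVec g) = 0 := funext fun i => by
    rw [mulVec_eq_inner_map_sum v A J hJ, ← hδF, hker i, Pi.zero_apply]
  rw [← mulVec_mulVec, ← mulVec_mulVec, hJδF, mulVec_zero]

/-- Let `v₁, …, v_N ∈ V` have invertible Gram matrix `M`, let `A` be a linear
operator on `V` (the Poisson operator), `Jᵢⱼ := ⟪A vⱼ, vᵢ⟫` and `Ĵ := M⁻¹ J M⁻¹`. Let `F` be
differentiable at `a` and `δF := ∑ⱼ (M⁻¹ ∇F(a))ⱼ vⱼ`. If `⟪A δF, vᵢ⟫ = 0` for every `i`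
(in particular if `δF` lies in the kernel of `A`), then `Ĵ ∇F(a) = 0`: discretisations of
continuous Casimirs whose gradients lie in the approximation space are discrete Casimirs. -/
theorem stmt_9 {V : Type*} [NormedAddCommGroup V] [InnerProductSpace ℝ V]
    (N : ℕ) (hN : 0 < N) (v : Fin N → V)
    (M : Matrix (Fin N) (Fin N) ℝ) (hM : ∀ i j, M i j = ⟪v j, v i⟫) (hMu : IsUnit M)
    (A : V →ₗ[ℝ] V)
    (J : Matrix (Fin N) (Fin N) ℝ) (hJ : ∀ i j, J i j = ⟪A (v j), v i⟫)
    (F : EuclideanSpace ℝ (Fin N) → ℝ) (a : EuclideanSpace ℝ (Fin N))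
    (hF : DifferentiableAt ℝ F a)
    (δF : V)
    (hδF : δF = ∑ j, M⁻¹.mulVec (gradient F a : EuclideanSpace ℝ (Fin N)) j • v j)
    (hker : ∀ i, ⟪A δF, v i⟫ = 0) :
    (M⁻¹ * J * M⁻¹).mulVec (gradient F a : EuclideanSpace ℝ (Fin N)) = 0 :=
  stmt_9_general N v M A J hJ F a δF hδF hker
end

section
/- Let N be a positive natural number, M ∈ ℝᴺˣᴺ an invertible matrix, J, G : ℝᴺ → ℝᴺˣᴺ matrix-valued maps, and H, S : ℝᴺ → ℝ differentiable. Set Ĵ(a) := M⁻¹ J(a) M⁻¹ and Ĝ(a) := M⁻¹ G(a) M⁻¹. If a* ∈ ℝᴺ satisfies J(a*) M⁻¹ ∇H(a*) + G(a*) M⁻¹ ∇S(a*) = 0, then Ĵ(a*) ∇H(a*) + Ĝ(a*) ∇S(a*) = 0, and consequently the constant function a(t) := a* is a solution of the semi-discrete system a'(t) = Ĵ(a(t)) ∇H(a(t)) + Ĝ(a(t)) ∇S(a(t)). (Equilibria of the continuous problem belonging to the approximation space are equilibria of the semi-discrete problem.) -/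
open Matrix

theorem Matrix.mul_mul_mulVec_add_mul_mul_mulVec {n R : Type*} [Fintype n] [CommSemiring R]
    (A B C D : Matrix n n R) (x y : n → R) :
    (A * B * C) *ᵥ x + (A * D * C) *ᵥ y = A *ᵥ (B *ᵥ (C *ᵥ x) + D *ᵥ (C *ᵥ y)) := by
  simp only [Matrix.mul_assoc, ← mulVec_mulVec, mulVec_add]

theorem stmt_11_general (N : ℕ)
    (M : Matrix (Fin N) (Fin N) ℝ)
    (J G : EuclideanSpace ℝ (Fin N) → Matrix (Fin N) (Fin N) ℝ)
    (H S : EuclideanSpace ℝ (Fin N) → ℝ)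
    (aStar : EuclideanSpace ℝ (Fin N))
    (heq : (J aStar).mulVec (M⁻¹.mulVec (gradient H aStar : EuclideanSpace ℝ (Fin N))) +
        (G aStar).mulVec (M⁻¹.mulVec (gradient S aStar : EuclideanSpace ℝ (Fin N))) = 0) :
    (M⁻¹ * J aStar * M⁻¹).mulVec (gradient H aStar : EuclideanSpace ℝ (Fin N)) +
        (M⁻¹ * G aStar * M⁻¹).mulVec (gradient S aStar : EuclideanSpace ℝ (Fin N)) = 0 ∧
      ∀ t : ℝ, HasDerivAt (fun _ : ℝ => aStar)
        (WithLp.toLp 2 ((M⁻¹ * J aStar * M⁻¹).mulVec (gradient H aStar : EuclideanSpace ℝ (Fin N)) +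
          (M⁻¹ * G aStar * M⁻¹).mulVec (gradient S aStar : EuclideanSpace ℝ (Fin N)))) t := by
  have equilibrium : (M⁻¹ * J aStar * M⁻¹).mulVec (gradient H aStar : EuclideanSpace ℝ (Fin N)) +
      (M⁻¹ * G aStar * M⁻¹).mulVec (gradient S aStar : EuclideanSpace ℝ (Fin N)) = 0 := by
    rw [mul_mul_mulVec_add_mul_mul_mulVec, heq, mulVec_zero]
  refine ⟨equilibrium, fun t => ?_⟩
  rw [equilibrium, WithLp.toLp_zero]
  exact hasDerivAt_const t aStar

/-- Let `M` be invertible, `Ĵ(a) := M⁻¹J(a)M⁻¹`, `Ĝ(a) := M⁻¹G(a)M⁻¹`. If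
`a*` satisfies `J(a*)M⁻¹∇H(a*) + G(a*)M⁻¹∇S(a*) = 0`, then
`Ĵ(a*)∇H(a*) + Ĝ(a*)∇S(a*) = 0`, and the constant function `a(t) := a*` solves the
semi-discrete system `a' = Ĵ(a)∇H(a) + Ĝ(a)∇S(a)`: equilibria of the continuous problem
belonging to the approximation space are equilibria of the semi-discrete problem. -/
theorem stmt_11 (N : ℕ) (hN : 0 < N)
    (M : Matrix (Fin N) (Fin N) ℝ) (hMu : IsUnit M)
    (J G : EuclideanSpace ℝ (Fin N) → Matrix (Fin N) (Fin N) ℝ)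
    (H S : EuclideanSpace ℝ (Fin N) → ℝ)
    (hH : Differentiable ℝ H) (hS : Differentiable ℝ S)
    (aStar : EuclideanSpace ℝ (Fin N))
    (heq : (J aStar).mulVec (M⁻¹.mulVec (gradient H aStar : EuclideanSpace ℝ (Fin N))) +
        (G aStar).mulVec (M⁻¹.mulVec (gradient S aStar : EuclideanSpace ℝ (Fin N))) = 0) :
    (M⁻¹ * J aStar * M⁻¹).mulVec (gradient H aStar : EuclideanSpace ℝ (Fin N)) +
        (M⁻¹ * G aStar * M⁻¹).mulVec (gradient S aStar : EuclideanSpace ℝ (Fin N)) = 0 ∧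
      ∀ t : ℝ, HasDerivAt (fun _ : ℝ => aStar)
        (WithLp.toLp 2 ((M⁻¹ * J aStar * M⁻¹).mulVec (gradient H aStar : EuclideanSpace ℝ (Fin N)) +
          (M⁻¹ * G aStar * M⁻¹).mulVec (gradient S aStar : EuclideanSpace ℝ (Fin N)))) t :=
  stmt_11_general N M J G H S aStar heq
end

section
/- Let N be a positive natural number, Ĵ ∈ ℝᴺˣᴺ a constant skew-symmetric matrix, H : ℝᴺ → ℝ continuously differentiable, and Δt ∈ ℝ. If a⁰, a¹ ∈ ℝᴺ satisfy the Average Vector Field step a¹ − a⁰ = Δt · ∫₀¹ Ĵ ∇H((1−ξ) a⁰ + ξ a¹) dξ, then H(a¹) = H(a⁰). (The AVF scheme with constant Poisson matrix exactly preserves the Hamiltonian.) -/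
open Matrix

open scoped RealInnerProductSpace

/-!
Along the segment `ξ ↦ (1 - ξ) a⁰ + ξ a¹`, the fundamental theorem of calculus gives
`H a¹ - H a⁰ = ⟪G, a¹ - a⁰⟫`, where `G = ∫₀¹ ∇H((1 - ξ) a⁰ + ξ a¹) dξ` is the averaged gradient.
Since `Ĵ` is constant it commutes with the integral, so the AVF step reads `a¹ - a⁰ = Δt Ĵ G`,
and `⟪G, Ĵ G⟫ = 0` by skew-symmetry.
-/

theorem Matrix.dotProduct_mulVec_self_eq_zero_of_transpose_eq_neg_s14 {n R : Type*} [Fintype n]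
    [CommRing R] [IsAddTorsionFree R] {J : Matrix n n R} (hJ : Jᵀ = -J) (v : n → R) :
    v ⬝ᵥ J *ᵥ v = 0 :=
  self_eq_neg.mp <| by
    conv_lhs =>
      rw [dotProduct_mulVec, ← mulVec_transpose, hJ, neg_mulVec, neg_dotProduct, dotProduct_comm]

theorem ContDiff.continuous_gradient {𝕜 E : Type*} [RCLike 𝕜] [NormedAddCommGroup E]
    [InnerProductSpace 𝕜 E] [CompleteSpace E] {H : E → 𝕜} (hH : ContDiff 𝕜 1 H) :
    Continuous (gradient H) :=
  (InnerProductSpace.toDual 𝕜 E).symm.continuous.comp (hH.continuous_fderiv one_ne_zero)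

section Segment

variable {E : Type*} [NormedAddCommGroup E] [InnerProductSpace ℝ E] [CompleteSpace E]
  {H : E → ℝ} (a b : E)

theorem ContDiff.continuous_gradient_segment (hH : ContDiff ℝ 1 H) :
    Continuous (fun ξ : ℝ ↦ gradient H ((1 - ξ) • a + ξ • b)) :=
  hH.continuous_gradient.comp (by fun_prop)

theorem ContDiff.hasDerivAt_comp_segment (hH : ContDiff ℝ 1 H) (ξ : ℝ) :
    HasDerivAt (fun t : ℝ ↦ H ((1 - t) • a + t • b))
      ⟪gradient H ((1 - ξ) • a + ξ • b), b - a⟫ ξ := by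
  have hsegment : HasDerivAt (fun t : ℝ ↦ (1 - t) • a + t • b) (b - a) ξ := by
    convert AffineMap.hasDerivAt_lineMap (a := a) (b := b) (x := ξ) using 1
    exact funext fun t ↦ (AffineMap.lineMap_apply_module a b t).symm
  have h := (hH.differentiable one_ne_zero _).hasGradientAt.hasFDerivAt.comp_hasDerivAt ξ hsegment
  rwa [InnerProductSpace.toDual_apply_apply] at h

theorem ContDiff.sub_eq_inner_integral_gradient_segment (hH : ContDiff ℝ 1 H) :
    H b - H a = ⟪∫ ξ in (0 : ℝ)..1, gradient H ((1 - ξ) • a + ξ • b), b - a⟫ := by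
  have hcont := hH.continuous_gradient_segment a b
  calc H b - H a = ∫ ξ in (0 : ℝ)..1, ⟪gradient H ((1 - ξ) • a + ξ • b), b - a⟫ := by
        symm
        simpa using intervalIntegral.integral_eq_sub_of_hasDerivAt
          (fun ξ _ ↦ hH.hasDerivAt_comp_segment a b ξ)
          ((hcont.inner continuous_const).intervalIntegrable 0 1)
    _ = ⟪∫ ξ in (0 : ℝ)..1, gradient H ((1 - ξ) • a + ξ • b), b - a⟫ := by
        simp_rw [real_inner_comm (b - a)]
        exact (innerSL ℝ (b - a)).intervalIntegral_comp_comm (hcont.intervalIntegrable 0 1)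

end Segment

theorem stmt_14_general (N : ℕ)
    (Jh : Matrix (Fin N) (Fin N) ℝ) (hskew : Jhᵀ = -Jh)
    (H : EuclideanSpace ℝ (Fin N) → ℝ) (hH : ContDiff ℝ 1 H)
    (Δt : ℝ) (a0 a1 : EuclideanSpace ℝ (Fin N))
    (hstep : a1 - a0 = Δt • ∫ ξ in (0:ℝ)..1,
      (WithLp.toLp 2 (Jh.mulVec (gradient H ((1 - ξ) • a0 + ξ • a1) : EuclideanSpace ℝ (Fin N))) :
        EuclideanSpace ℝ (Fin N))) :
    H a1 = H a0 := by
  set G := ∫ ξ in (0 : ℝ)..1, gradient H ((1 - ξ) • a0 + ξ • a1)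
  have hstepG : a1 - a0 = Δt • toEuclideanCLM (𝕜 := ℝ) Jh G := by
    rw [hstep, ← ContinuousLinearMap.intervalIntegral_comp_comm _
      ((hH.continuous_gradient_segment a0 a1).intervalIntegrable 0 1)]
    rfl
  rw [← sub_eq_zero, hH.sub_eq_inner_integral_gradient_segment, hstepG, inner_smul_right,
    inner_toEuclideanCLM, dotProduct_mulVec_self_eq_zero_of_transpose_eq_neg_s14 hskew, mul_zero]

/-- If `Ĵ` is a constant skew-symmetric matrix, `H` is continuously
differentiable and `a⁰, a¹` satisfy the Average Vector Field step
`a¹ − a⁰ = Δt ∫₀¹ Ĵ ∇H((1−ξ)a⁰ + ξa¹) dξ`, then `H(a¹) = H(a⁰)`: the AVF scheme with constant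
Poisson matrix exactly preserves the Hamiltonian. -/
theorem stmt_14 (N : ℕ) (hN : 0 < N)
    (Jh : Matrix (Fin N) (Fin N) ℝ) (hskew : Jhᵀ = -Jh)
    (H : EuclideanSpace ℝ (Fin N) → ℝ) (hH : ContDiff ℝ 1 H)
    (Δt : ℝ) (a0 a1 : EuclideanSpace ℝ (Fin N))
    (hstep : a1 - a0 = Δt • ∫ ξ in (0:ℝ)..1,
      (WithLp.toLp 2 (Jh.mulVec (gradient H ((1 - ξ) • a0 + ξ • a1) : EuclideanSpace ℝ (Fin N))) :
        EuclideanSpace ℝ (Fin N))) :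
    H a1 = H a0 :=
  stmt_14_general N Jh hskew H hH Δt a0 a1 hstep
end

section
/- Let N be a positive natural number, L ∈ ℝᴺˣᴺ symmetric positive definite, and define the quadratic entropy S(a) := a · (L a) for a ∈ ℝᴺ (so ∇S(a) = 2 L a). Let Ĵ, Ĝ : ℝᴺ → ℝᴺˣᴺ with Ĝ(m) symmetric positive semi-definite at the midpoint m := (a⁰ + a¹)/2, let H : ℝᴺ → ℝ be differentiable, Δt > 0, and suppose a⁰, a¹ ∈ ℝᴺ satisfy the implicit midpoint step a¹ − a⁰ = Δt · (Ĵ(m) ∇H(m) + Ĝ(m) ∇S(m)). If either Ĵ ≡ 0 or the degeneracy condition Ĵ(m) ∇S(m) = 0 holds with Ĵ(m) skew-symmetric, then S(a¹) ≥ S(a⁰). (The implicit midpoint rule satisfies the dissipation law for a quadratic entropy.) -/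
/-!
For a symmetric `L`, the increment of the quadratic entropy over one step is exactly
`∇S(m) · (a¹ − a⁰)` at the midpoint `m`, with no remainder term. Inserting the midpoint step,
the `Ĵ`-part is orthogonal to `∇S(m)` (trivially if `Ĵ ≡ 0`, and by skew-symmetry plus the
degeneracy condition otherwise), so the increment is `Δt ∇S(m) · Ĝ(m) ∇S(m) ≥ 0`.
-/

open Matrix

namespace Matrix

variable {n R : Type*} [Fintype n]

theorem dotProduct_mulVec_self_sub_of_isSymm [CommRing R] {L : Matrix n n R} (hL : L.IsSymm)
    (x y : n → R) :
    x ⬝ᵥ L *ᵥ x - y ⬝ᵥ L *ᵥ y = L *ᵥ (x + y) ⬝ᵥ (x - y) := by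
  have hcross : L *ᵥ x ⬝ᵥ y = L *ᵥ y ⬝ᵥ x := by
    rw [dotProduct_comm, dotProduct_mulVec, ← mulVec_transpose, hL.eq]
  rw [mulVec_add, add_dotProduct, dotProduct_sub, dotProduct_sub, hcross, dotProduct_comm x,
    dotProduct_comm y]
  ring

theorem dotProduct_mulVec_eq_zero_of_transpose_eq_neg [CommRing R] {J : Matrix n n R}
    (hJ : Jᵀ = -J) {g : n → R} (hg : J *ᵥ g = 0) (v : n → R) : g ⬝ᵥ J *ᵥ v = 0 := by
  rw [dotProduct_mulVec, ← mulVec_transpose, hJ, neg_mulVec, hg, neg_zero, zero_dotProduct]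

theorem dotProduct_mulVec_self_le_of_midpoint_step {L G : Matrix n n ℝ} (hL : L.IsSymm)
    (hG : G.PosSemidef) {Δt : ℝ} (hΔt : 0 ≤ Δt) {x₀ x₁ m v : n → ℝ}
    (hm : x₀ + x₁ = (2 : ℝ) • m) (hv : ((2 : ℝ) • L *ᵥ m) ⬝ᵥ v = 0)
    (hstep : x₁ - x₀ = Δt • (v + G *ᵥ ((2 : ℝ) • L *ᵥ m))) :
    x₀ ⬝ᵥ L *ᵥ x₀ ≤ x₁ ⬝ᵥ L *ᵥ x₁ := by
  set g := (2 : ℝ) • L *ᵥ m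
  have hgGg : 0 ≤ g ⬝ᵥ G *ᵥ g := by simpa using hG.dotProduct_mulVec_nonneg g
  have hincr : x₁ ⬝ᵥ L *ᵥ x₁ - x₀ ⬝ᵥ L *ᵥ x₀ = Δt * (g ⬝ᵥ G *ᵥ g) := by
    rw [dotProduct_mulVec_self_sub_of_isSymm hL, add_comm, hm, mulVec_smul, hstep,
      dotProduct_smul, dotProduct_add, hv, zero_add, smul_eq_mul]
  linarith [mul_nonneg hΔt hgGg]

end Matrix

theorem stmt_18_general (N : ℕ)
    (L : Matrix (Fin N) (Fin N) ℝ) (hL : L.PosDef)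
    (S : EuclideanSpace ℝ (Fin N) → ℝ)
    (hSdef : ∀ x : EuclideanSpace ℝ (Fin N), S x = x ⬝ᵥ L.mulVec x)
    (Jh Gh : EuclideanSpace ℝ (Fin N) → Matrix (Fin N) (Fin N) ℝ)
    (H : EuclideanSpace ℝ (Fin N) → ℝ)
    (Δt : ℝ) (hΔt : 0 < Δt) (a0 a1 m : EuclideanSpace ℝ (Fin N))
    (hm : m = ((1 : ℝ) / 2) • (a0 + a1))
    (hGpsd : (Gh m).PosSemidef)
    (hstep : a1 - a0 = Δt •
      (WithLp.toLp 2 ((Jh m).mulVec (gradient H m : EuclideanSpace ℝ (Fin N)) +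
        (Gh m).mulVec ((2 : ℝ) • L.mulVec m)) : EuclideanSpace ℝ (Fin N)))
    (hdeg : (Jh = fun _ => 0) ∨
      ((Jh m).mulVec ((2 : ℝ) • L.mulVec m) = 0 ∧ (Jh m)ᵀ = -(Jh m))) :
    S a0 ≤ S a1 := by
  have hmid : (a0 + a1 : Fin N → ℝ) = (2 : ℝ) • (m : Fin N → ℝ) := by
    subst hm
    ext i
    simp only [Pi.add_apply, Pi.smul_apply, PiLp.smul_apply, PiLp.add_apply, smul_eq_mul]
    ring
  have hJ : ((2 : ℝ) • L *ᵥ m) ⬝ᵥ (Jh m *ᵥ (gradient H m : EuclideanSpace ℝ (Fin N))) = 0 := by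
    rcases hdeg with hJ0 | ⟨hker, hskew⟩
    · simp [hJ0]
    · exact dotProduct_mulVec_eq_zero_of_transpose_eq_neg hskew hker _
  rw [hSdef, hSdef]
  exact dotProduct_mulVec_self_le_of_midpoint_step hL.isHermitian hGpsd hΔt.le hmid hJ
    (congrArg WithLp.ofLp hstep)

/-- Let `L` be symmetric positive definite and `S(a) := a · (L a)` (so
`∇S(a) = 2 L a`). Suppose `Ĝ(m)` is symmetric positive semi-definite at the midpoint
`m := (a⁰ + a¹)/2`, `Δt > 0`, and `a⁰, a¹` satisfy the implicit midpoint step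
`a¹ − a⁰ = Δt (Ĵ(m)∇H(m) + Ĝ(m)∇S(m))`. If either `Ĵ ≡ 0` or the degeneracy condition
`Ĵ(m)∇S(m) = 0` holds with `Ĵ(m)` skew-symmetric, then `S(a¹) ≥ S(a⁰)`: the implicit midpoint
rule satisfies the dissipation law for a quadratic entropy. -/
theorem stmt_18 (N : ℕ) (hN : 0 < N)
    (L : Matrix (Fin N) (Fin N) ℝ) (hL : L.PosDef)
    (S : EuclideanSpace ℝ (Fin N) → ℝ)
    (hSdef : ∀ x : EuclideanSpace ℝ (Fin N), S x = x ⬝ᵥ L.mulVec x)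
    (Jh Gh : EuclideanSpace ℝ (Fin N) → Matrix (Fin N) (Fin N) ℝ)
    (H : EuclideanSpace ℝ (Fin N) → ℝ) (hH : Differentiable ℝ H)
    (Δt : ℝ) (hΔt : 0 < Δt) (a0 a1 m : EuclideanSpace ℝ (Fin N))
    (hm : m = ((1 : ℝ) / 2) • (a0 + a1))
    (hGpsd : (Gh m).PosSemidef)
    (hstep : a1 - a0 = Δt •
      (WithLp.toLp 2 ((Jh m).mulVec (gradient H m : EuclideanSpace ℝ (Fin N)) +
        (Gh m).mulVec ((2 : ℝ) • L.mulVec m)) : EuclideanSpace ℝ (Fin N)))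
    (hdeg : (Jh = fun _ => 0) ∨
      ((Jh m).mulVec ((2 : ℝ) • L.mulVec m) = 0 ∧ (Jh m)ᵀ = -(Jh m))) :
    S a0 ≤ S a1 :=
  stmt_18_general N L hL S hSdef Jh Gh H Δt hΔt a0 a1 m hm hGpsd hstep hdeg
end
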